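/- For the regular hexagonal tiling of the plane by congruent regular hexagons of area 1, properly 3-colored so that no two hexagons sharing an edge have the same color, the minimal Euclidean distance between two same-colored points lying in different hexagons equals the side length s of the hexagon, where s = (2/(3√3))^{1/2}; numerically this minimal distance is approximately 0.62, giving fault tolerance approximately 0.31. -/

import Mathlib

/-!
Every hexagon lies in the closed disc of radius `s` about its centre. The centres of hexagons
`(m, n)` and `(m', n')` are at squared distance `3s²(a² + ab + b²)`, where
`(a, b) = (m - m', n - n')`, and equal colours mean `3 ∣ a - b`; then `a² + ab + b²` is a
positive multiple of `3`, so the centres are at least `3s` apart and the triangle inequality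
leaves at least `3s - 2s = s` between the hexagons. The two endpoints of any edge lie in two
hexagons of the same colour, which gives equality.
-/

/-- The side length of a regular hexagon of area 1: s = (2/(3√3))^{1/2}. -/
noncomputable def hexSide : ℝ := Real.sqrt (2 / (3 * Real.sqrt 3))

/-- The center of the hexagon with lattice coordinates `(m, n)` in the hexagonal tiling. -/
noncomputable def hexCenter (m n : ℤ) : ℝ × ℝ :=
  (Real.sqrt 3 * hexSide * ((m : ℝ) + (n : ℝ) / 2), 3 * hexSide / 2 * (n : ℝ))

/-- The regular hexagon of side `hexSide` centered at `hexCenter m n`: the intersection of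
three slabs of half-width √3·s/2 (the apothem), with normals at angles 0°, 60°, 120°. -/
noncomputable def hexTile (m n : ℤ) : Set (EuclideanSpace ℝ (Fin 2)) :=
  {x | |x 0 - (hexCenter m n).1| ≤ Real.sqrt 3 * hexSide / 2 ∧
       |(x 0 - (hexCenter m n).1) / 2 + Real.sqrt 3 * (x 1 - (hexCenter m n).2) / 2| ≤
          Real.sqrt 3 * hexSide / 2 ∧
       |(x 0 - (hexCenter m n).1) / 2 - Real.sqrt 3 * (x 1 - (hexCenter m n).2) / 2| ≤
          Real.sqrt 3 * hexSide / 2}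

/-- The proper 3-coloring of the hexagonal tiling: no two hexagons sharing an edge get the
same color. -/
def hexColor (m n : ℤ) : ZMod 3 := ((m - n : ℤ) : ZMod 3)

lemma hexSide_pos : 0 < hexSide := Real.sqrt_pos.mpr (by positivity)

noncomputable def hexCenterPoint (m n : ℤ) : EuclideanSpace ℝ (Fin 2) :=
  !₂[(hexCenter m n).1, (hexCenter m n).2]

lemma EuclideanSpace.dist_sq_eq_fin_two (x y : EuclideanSpace ℝ (Fin 2)) :
    dist x y ^ 2 = (x 0 - y 0) ^ 2 + (x 1 - y 1) ^ 2 := by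
  simp [EuclideanSpace.dist_sq_eq, Fin.sum_univ_two, Real.dist_eq, sq_abs]

/-- If `bc ≥ 0` the left side is at most `(b + c)²`; otherwise at most `max (b²) (c²)`. -/
lemma sq_add_mul_add_sq_le {a b c : ℝ} (hb : |b| ≤ a) (hc : |c| ≤ a) (hbc : |b + c| ≤ a) :
    b ^ 2 + b * c + c ^ 2 ≤ a ^ 2 := by
  rw [abs_le] at hb hc hbc
  rcases le_total 0 (b * c) with h | h
  · nlinarith
  · rcases le_total 0 b with h' | h' <;> nlinarith

lemma hexTile_subset_closedBall (m n : ℤ) :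
    hexTile m n ⊆ Metric.closedBall (hexCenterPoint m n) hexSide := by
  intro x ⟨h₀, h₁, h₂⟩
  set X := x 0 - (hexCenter m n).1
  set Y := x 1 - (hexCenter m n).2
  have h3 : Real.sqrt 3 ^ 2 = 3 := Real.sq_sqrt (by norm_num)
  have key := sq_add_mul_add_sq_le h₁ h₂ (by convert h₀ using 2; ring)
  have hXY : X ^ 2 + Y ^ 2 ≤ hexSide ^ 2 := by
    linear_combination (4 / 3) * key + (hexSide ^ 2 - Y ^ 2) / 3 * h3
  rw [Metric.mem_closedBall, ← pow_le_pow_iff_left₀ dist_nonneg hexSide_pos.le two_ne_zero,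
    EuclideanSpace.dist_sq_eq_fin_two]
  simpa [hexCenterPoint] using hXY

lemma three_le_sq_add_mul_add_sq {a b : ℤ} (hab : (a, b) ≠ 0) (h : 3 ∣ a - b) :
    3 ≤ a ^ 2 + a * b + b ^ 2 := by
  have hpos : 0 < a ^ 2 + a * b + b ^ 2 := by
    obtain ha | hb : a ≠ 0 ∨ b ≠ 0 := by
      contrapose! hab
      simp [hab]
    · nlinarith [sq_pos_of_ne_zero ha, sq_nonneg b, sq_nonneg (a + b)]
    · nlinarith [sq_pos_of_ne_zero hb, sq_nonneg a, sq_nonneg (a + b)]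
  obtain ⟨k, hk⟩ := h
  have hdvd : 3 ∣ a ^ 2 + a * b + b ^ 2 :=
    ⟨b ^ 2 + 3 * b * k + 3 * k ^ 2, by rw [show a = b + 3 * k by omega]; ring⟩
  exact Int.le_of_dvd hpos hdvd

lemma dist_hexCenterPoint_sq (m n m' n' : ℤ) :
    dist (hexCenterPoint m n) (hexCenterPoint m' n') ^ 2 =
      3 * hexSide ^ 2 *
        (((m - m' : ℤ) : ℝ) ^ 2 + (m - m' : ℤ) * (n - n' : ℤ) + ((n - n' : ℤ) : ℝ) ^ 2) := by
  have h3 : Real.sqrt 3 ^ 2 = 3 := Real.sq_sqrt (by norm_num)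
  simp only [EuclideanSpace.dist_sq_eq_fin_two, hexCenterPoint, hexCenter, Matrix.cons_val_zero,
    Matrix.cons_val_one, Matrix.cons_val_fin_one, Int.cast_sub]
  linear_combination (hexSide ^ 2 * ((m : ℝ) + n / 2 - (m' + n' / 2)) ^ 2) * h3

lemma three_mul_hexSide_le_dist {m n m' n' : ℤ} (hne : (m, n) ≠ (m', n'))
    (hcol : hexColor m n = hexColor m' n') :
    3 * hexSide ≤ dist (hexCenterPoint m n) (hexCenterPoint m' n') := by
  have h3 : (3 : ℤ) ∣ (m' - n') - (m - n) :=
    (ZMod.intCast_eq_intCast_iff_dvd_sub _ _ 3).mp hcol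
  have hab : (m - m', n - n') ≠ 0 := by simpa [Prod.ext_iff, sub_eq_zero] using hne
  have hnorm : (3 : ℝ) ≤
      ((m - m' : ℤ) : ℝ) ^ 2 + (m - m' : ℤ) * (n - n' : ℤ) + ((n - n' : ℤ) : ℝ) ^ 2 := by
    exact_mod_cast three_le_sq_add_mul_add_sq hab (by omega)
  rw [← pow_le_pow_iff_left₀ (by linarith [hexSide_pos]) dist_nonneg two_ne_zero,
    dist_hexCenterPoint_sq]
  nlinarith [sq_nonneg hexSide]

lemma vertical_mem_hexTile (m n : ℤ) {t : ℝ} (ht : |t| ≤ hexSide) :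
    !₂[(hexCenter m n).1, (hexCenter m n).2 + t] ∈ hexTile m n := by
  have h3 : 0 < Real.sqrt 3 := by positivity
  have hbound : |Real.sqrt 3 * t / 2| ≤ Real.sqrt 3 * hexSide / 2 := by
    rw [abs_div, abs_mul, abs_of_pos h3, abs_two]
    gcongr
  refine ⟨?_, ?_, ?_⟩
  · simpa using (abs_nonneg _).trans hbound
  · simpa using hbound
  · simpa using hbound

lemma hexSide_le_dist_of_hexColor_eq {m n m' n' : ℤ} (hne : (m, n) ≠ (m', n'))
    (hcol : hexColor m n = hexColor m' n') {x y : EuclideanSpace ℝ (Fin 2)}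
    (hx : x ∈ hexTile m n) (hy : y ∈ hexTile m' n') :
    hexSide ≤ dist x y := by
  have hxc := Metric.mem_closedBall'.mp (hexTile_subset_closedBall m n hx)
  have hyc := Metric.mem_closedBall.mp (hexTile_subset_closedBall m' n' hy)
  linarith [three_mul_hexSide_le_dist hne hcol,
    dist_triangle4 (hexCenterPoint m n) x y (hexCenterPoint m' n')]

/-- For the regular hexagonal tiling of the plane by regular hexagons of
area 1, properly 3-colored, the minimal Euclidean distance between two same-colored points
lying in different hexagons equals the side length s = (2/(3√3))^{1/2} of the hexagon. -/
theorem stmt_7 :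
    IsLeast {d : ℝ | ∃ m n m' n' : ℤ, (m, n) ≠ (m', n') ∧
        hexColor m n = hexColor m' n' ∧
        ∃ x ∈ hexTile m n, ∃ y ∈ hexTile m' n', d = dist x y} hexSide := by
  have hs := hexSide_pos
  refine ⟨?_, ?_⟩
  · -- the two endpoints of the edge shared by the hexagons `(-1, 1)` and `(0, 1)`
    refine ⟨0, 0, -1, 2, by decide, by decide, _, vertical_mem_hexTile 0 0 (t := hexSide) ?_,
      _, vertical_mem_hexTile (-1) 2 (t := -hexSide) ?_, ?_⟩
    · rw [abs_of_pos hs]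
    · rw [abs_neg, abs_of_pos hs]
    · rw [← pow_left_inj₀ hs.le dist_nonneg two_ne_zero, EuclideanSpace.dist_sq_eq_fin_two]
      norm_num [hexCenter]
      ring
  · rintro d ⟨m, n, m', n', hne, hcol, x, hx, y, hy, rfl⟩
    exact hexSide_le_dist_of_hexColor_eq hne hcol hx hy
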